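/- arXiv:2109.14291 — 2 statements merged into one kernel-verified Lean document; each statement's English description precedes it below -/
import Mathlib

section
/- If σ̃ = Φ̄, then every positive solution ρ of ρ' = μρ[Φ(t)·tanh(ρ)/ρ − σ̃] satisfies ρ(t+T) ≤ ρ(t) for all t ≥ 0. -/
open Real intervalIntegral

lemma my_tanh_le_self {x : ℝ} (hx : 0 ≤ x) : Real.tanh x ≤ x := by
  have key : Real.sinh x ≤ x * Real.cosh x := by
    have hmono : MonotoneOn (fun y => y * Real.cosh y - Real.sinh y) (Set.Ici 0) := by
      apply monotoneOn_of_deriv_nonneg (convex_Ici 0)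
      · exact (Continuous.mul continuous_id Real.continuous_cosh).sub
          Real.continuous_sinh |>.continuousOn
      · intro y hy
        exact (((differentiable_id.mul Real.differentiable_cosh).sub
          Real.differentiable_sinh) y).differentiableWithinAt
      · intro y hy
        simp only [interior_Ici, Set.mem_Ioi] at hy
        have : HasDerivAt (fun y => y * Real.cosh y - Real.sinh y)
            (1 * Real.cosh y + y * Real.sinh y - Real.cosh y) y :=
          ((hasDerivAt_id y).mul (Real.hasDerivAt_cosh y)).sub (Real.hasDerivAt_sinh y)
        rw [this.deriv]
        have := Real.sinh_pos_iff.mpr hy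
        nlinarith
    have h0 : (fun y => y * Real.cosh y - Real.sinh y) 0 ≤
        (fun y => y * Real.cosh y - Real.sinh y) x :=
      hmono Set.self_mem_Ici hx hx
    simp only [Real.cosh_zero, Real.sinh_zero, zero_mul, sub_zero] at h0
    linarith
  rw [Real.tanh_eq_sinh_div_cosh, div_le_iff₀ (Real.cosh_pos _)]
  exact key

theorem period_decreasing_of_critical_mean (μ T : ℝ)
    (hμ : 0 < μ) (hT : 0 < T)
    (Φ : ℝ → ℝ) (hΦc : Continuous Φ) (hΦpos : ∀ t, 0 < Φ t)
    (hΦper : Function.Periodic Φ T)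
    (σt : ℝ) (hcrit : σt = (1 / T) * ∫ t in (0:ℝ)..T, Φ t)
    (ρ : ℝ → ℝ) (hρpos : ∀ t, 0 ≤ t → 0 < ρ t)
    (hode : ∀ t, 0 ≤ t →
      HasDerivAt ρ (μ * ρ t * (Φ t * (Real.tanh (ρ t) / ρ t) - σt)) t) :
    ∀ t, 0 ≤ t → ρ (t + T) ≤ ρ t := by
  intro t ht
  have hle : t ≤ t + T := by linarith
  set g : ℝ → ℝ := fun s => Real.log (ρ s) with hg_def
  set g' : ℝ → ℝ := fun s => μ * (Φ s * (Real.tanh (ρ s) / ρ s) - σt) with hg'_def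
  have hmem : ∀ s ∈ Set.Icc t (t + T), 0 ≤ s := fun s hs => le_trans ht hs.1
  -- derivative of log ρ
  have hderiv : ∀ s ∈ Set.Icc t (t + T), HasDerivAt g (g' s) s := by
    intro s hs
    have hs0 := hmem s hs
    have hρ := hρpos s hs0
    have := (hode s hs0).log (ne_of_gt hρ)
    convert this using 1
    rw [eq_div_iff hρ.ne']
    ring
  -- continuity of ρ on Icc
  have hρcont : ContinuousOn ρ (Set.Icc t (t + T)) := by
    intro s hs
    exact ((hode s (hmem s hs)).continuousAt).continuousWithinAt
  have hg'cont : ContinuousOn g' (Set.Icc t (t + T)) := by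
    apply ContinuousOn.mul continuousOn_const
    apply ContinuousOn.sub _ continuousOn_const
    apply ContinuousOn.mul hΦc.continuousOn
    have htanhc : Continuous Real.tanh := by
      have he : Real.tanh = fun x => Real.sinh x / Real.cosh x :=
        funext fun x => Real.tanh_eq_sinh_div_cosh x
      rw [he]
      exact Real.continuous_sinh.div Real.continuous_cosh fun x => (Real.cosh_pos x).ne'
    apply ContinuousOn.div (htanhc.comp_continuousOn hρcont) hρcont
    intro s hs; exact ne_of_gt (hρpos s (hmem s hs))
  have hint : IntervalIntegrable g' MeasureTheory.volume t (t + T) := by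
    apply ContinuousOn.intervalIntegrable
    rwa [Set.uIcc_of_le hle]
  have hFTC : ∫ s in t..(t + T), g' s = g (t + T) - g t := by
    apply intervalIntegral.integral_eq_sub_of_hasDerivAt
    · intro s hs
      rw [Set.uIcc_of_le hle] at hs
      exact hderiv s hs
    · exact hint
  -- pointwise bound
  have hbound : ∀ s ∈ Set.Icc t (t + T), g' s ≤ μ * (Φ s - σt) := by
    intro s hs
    have hρ := hρpos s (hmem s hs)
    have htanh : Real.tanh (ρ s) / ρ s ≤ 1 :=
      (div_le_one hρ).mpr (my_tanh_le_self hρ.le)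
    have : Φ s * (Real.tanh (ρ s) / ρ s) ≤ Φ s * 1 :=
      mul_le_mul_of_nonneg_left htanh (hΦpos s).le
    simp only [hg'_def]
    nlinarith
  have hint2 : IntervalIntegrable (fun s => μ * (Φ s - σt)) MeasureTheory.volume t (t + T) :=
    (continuous_const.mul (hΦc.sub continuous_const)).intervalIntegrable _ _
  have hmono : ∫ s in t..(t + T), g' s ≤ ∫ s in t..(t + T), μ * (Φ s - σt) :=
    intervalIntegral.integral_mono_on hle hint hint2 hbound
  -- compute RHS
  have hΦint : ∀ a b : ℝ, IntervalIntegrable Φ MeasureTheory.volume a b :=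
    fun a b => hΦc.intervalIntegrable a b
  have hperint : ∫ s in t..(t + T), Φ s = ∫ s in (0:ℝ)..T, Φ s := by
    have := hΦper.intervalIntegral_add_eq t 0
    simpa using this
  have hrhs : ∫ s in t..(t + T), μ * (Φ s - σt) = 0 := by
    rw [intervalIntegral.integral_const_mul, intervalIntegral.integral_sub (hΦint _ _)
      (intervalIntegrable_const), hperint, intervalIntegral.integral_const]
    have : σt * T = ∫ s in (0:ℝ)..T, Φ s := by
      rw [hcrit]; field_simp
    rw [show (t + T - t) = T by ring, smul_eq_mul]
    nlinarith [this]
  have hfinal : g (t + T) ≤ g t := by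
    have := hmono
    rw [hFTC, hrhs] at this
    linarith
  have h1 := hρpos t ht
  have h2 := hρpos (t + T) (by linarith)
  exact (Real.log_le_log_iff h2 h1).mp hfinal
end

section
/- If σ̃ ≥ Φ̄, then every positive solution ρ of ρ' = μρ[Φ(t)·tanh(ρ)/ρ − σ̃] satisfies lim_{t→∞} ρ(t) = 0. -/
open Filter Set intervalIntegral

lemma tanh_lt_self' {x : ℝ} (hx : 0 < x) : Real.tanh x < x := by
  have hg : ∀ y : ℝ, HasDerivAt (fun y => y * Real.cosh y - Real.sinh y)
      (y * Real.sinh y) y := by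
    intro y
    have h1 := ((hasDerivAt_id y).mul (Real.hasDerivAt_cosh y)).sub (Real.hasDerivAt_sinh y)
    exact h1.congr_deriv (by simp [id])
  have mono : StrictMonoOn (fun y => y * Real.cosh y - Real.sinh y) (Set.Ici 0) := by
    apply strictMonoOn_of_deriv_pos (convex_Ici 0)
    · exact fun y _ => (hg y).continuousAt.continuousWithinAt
    · intro y hy
      rw [interior_Ici, mem_Ioi] at hy
      rw [(hg y).deriv]
      exact mul_pos hy (Real.sinh_pos_iff.mpr hy)
  have h0 := mono (self_mem_Ici) (mem_Ici.mpr hx.le) hx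
  simp only [Real.cosh_zero, Real.sinh_zero, mul_one, zero_mul, sub_zero, zero_sub, neg_zero] at h0
  rw [Real.tanh_eq_sinh_div_cosh, div_lt_iff₀ (Real.cosh_pos x)]
  linarith

lemma key_comp {y d g : ℝ → ℝ} (hg : Continuous g)
    (hy : ∀ t, 0 ≤ t → HasDerivAt y (d t) t)
    (hle : ∀ t, 0 ≤ t → d t ≤ g t)
    {a b : ℝ} (ha : 0 ≤ a) (hab : a ≤ b) :
    y b - y a ≤ ∫ s in a..b, g s := by
  set G := fun t => ∫ s in (0:ℝ)..t, g s with hGdef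
  have hG : ∀ t : ℝ, HasDerivAt G (g t) t := fun t =>
    (hg.integral_hasStrictDerivAt 0 t).hasDerivAt
  have hF : ∀ t, 0 ≤ t → HasDerivAt (fun t => y t - G t) (d t - g t) t :=
    fun t ht => (hy t ht).sub (hG t)
  have anti : AntitoneOn (fun t => y t - G t) (Set.Ici 0) := by
    apply antitoneOn_of_deriv_nonpos (convex_Ici 0)
    · exact fun t ht => (hF t ht).continuousAt.continuousWithinAt
    · intro t ht
      rw [interior_Ici, mem_Ioi] at ht
      exact (hF t ht.le).differentiableAt.differentiableWithinAt
    · intro t ht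
      rw [interior_Ici, mem_Ioi] at ht
      rw [(hF t ht.le).deriv]
      exact sub_nonpos.mpr (hle t ht.le)
  have h := anti (mem_Ici.mpr ha) (mem_Ici.mpr (ha.trans hab)) hab
  have hsplit : G a + ∫ s in a..b, g s = G b :=
    integral_add_adjacent_intervals (hg.intervalIntegrable _ _) (hg.intervalIntegrable _ _)
  simp only at h
  linarith

lemma int_bound {T σt M : ℝ} {Φ : ℝ → ℝ} (hT : 0 < T) (hΦc : Continuous Φ)
    (hΦper : Function.Periodic Φ T) (hM : ∀ t, Φ t ≤ M) (hM0 : 0 ≤ M) (hσ : 0 ≤ σt)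
    (hI : (∫ s in (0:ℝ)..T, Φ s) ≤ σt * T)
    {a b : ℝ} (hab : a ≤ b) :
    (∫ s in a..b, (Φ s - σt)) ≤ T * M := by
  have hper : Function.Periodic (fun s => Φ s - σt) T := fun x => by simp [hΦper x]
  have hint : ∀ u v : ℝ, IntervalIntegrable (fun s => Φ s - σt) MeasureTheory.volume u v :=
    fun u v => (hΦc.sub continuous_const).intervalIntegrable u v
  set k := ⌊(b - a) / T⌋₊ with hk
  have hk1 : (k : ℝ) * T ≤ b - a := by
    rw [← le_div_iff₀ hT]
    exact Nat.floor_le (div_nonneg (sub_nonneg.2 hab) hT.le)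
  have hk2 : b - a < ((k : ℝ) + 1) * T := by
    rw [← div_lt_iff₀ hT]
    exact Nat.lt_floor_add_one _
  set b' := b - (k : ℝ) * T with hb'
  have hab' : a ≤ b' := by simp only [hb']; linarith
  have hb'T : b' - a ≤ T := by simp only [hb']; nlinarith
  have hsplit : (∫ s in a..b', (Φ s - σt)) + (∫ s in b'..b, (Φ s - σt))
      = ∫ s in a..b, (Φ s - σt) :=
    integral_add_adjacent_intervals (hint _ _) (hint _ _)
  have hper_int : (∫ s in b'..b, (Φ s - σt)) = (k : ℝ) * ((∫ s in (0:ℝ)..T, Φ s) - σt * T) := by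
    have hb : b = b' + (k : ℤ) • T := by rw [zsmul_eq_mul]; push_cast; simp only [hb']; ring
    rw [hb, hper.intervalIntegral_add_zsmul_eq (k : ℤ) b' hint]
    have h1 : (∫ s in b'..b' + T, (Φ s - σt)) = ∫ s in (0:ℝ)..0 + T, (Φ s - σt) :=
      hper.intervalIntegral_add_eq b' 0
    rw [h1]
    have h2 : (∫ s in (0:ℝ)..0 + T, (Φ s - σt))
        = (∫ s in (0:ℝ)..T, Φ s) - σt * T := by
      rw [zero_add, integral_sub (hΦc.intervalIntegrable _ _)
        (intervalIntegrable_const), integral_const]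
      simp [mul_comm]
    rw [h2, zsmul_eq_mul]
    push_cast
    ring
  have h3 : (∫ s in a..b', (Φ s - σt)) ≤ (b' - a) * M := by
    calc (∫ s in a..b', (Φ s - σt)) ≤ ∫ _ in a..b', M := by
          apply integral_mono_on hab' (hint _ _) intervalIntegrable_const
          intro x _
          have := hM x
          linarith [hσ]
      _ = (b' - a) * M := by rw [integral_const]; simp [smul_eq_mul]
  have h4 : (k : ℝ) * ((∫ s in (0:ℝ)..T, Φ s) - σt * T) ≤ 0 := by
    apply mul_nonpos_of_nonneg_of_nonpos (Nat.cast_nonneg k)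
    linarith
  have h5 : (b' - a) * M ≤ T * M := mul_le_mul_of_nonneg_right hb'T hM0
  linarith

lemma continuous_tanh' : Continuous Real.tanh := by
  have h : Real.tanh = fun x => Real.sinh x / Real.cosh x :=
    funext fun x => Real.tanh_eq_sinh_div_cosh (x := x)
  rw [h]
  exact Real.continuous_sinh.div Real.continuous_cosh fun x => (Real.cosh_pos x).ne'

theorem zero_globally_stable_of_mean_le (μ σt T : ℝ)
    (hμ : 0 < μ) (hσt : 0 < σt) (hT : 0 < T)
    (Φ : ℝ → ℝ) (hΦc : Continuous Φ) (hΦpos : ∀ t, 0 < Φ t)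
    (hΦper : Function.Periodic Φ T)
    (hmean : (1 / T) * ∫ t in (0:ℝ)..T, Φ t ≤ σt)
    (ρ : ℝ → ℝ) (hρpos : ∀ t, 0 ≤ t → 0 < ρ t)
    (hode : ∀ t, 0 ≤ t →
      HasDerivAt ρ (μ * ρ t * (Φ t * (Real.tanh (ρ t) / ρ t) - σt)) t) :
    Tendsto ρ atTop (nhds 0) := by
  -- the max of Φ
  obtain ⟨r, hrmem, hr'⟩ := isCompact_Icc.exists_isMaxOn (Set.nonempty_Icc.mpr hT.le)
    hΦc.continuousOn
  have hr := isMaxOn_iff.mp hr'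
  set M := Φ r with hMdef
  have hM : ∀ t, Φ t ≤ M := by
    intro t
    obtain ⟨u, hu, hut⟩ := hΦper.exists_mem_Ico₀ hT t
    rw [hut]
    exact hr u ⟨hu.1, hu.2.le⟩
  have hM0 : (0:ℝ) < M := hΦpos r
  set I := ∫ s in (0:ℝ)..T, Φ s with hIdef
  have hIσ : I ≤ σt * T := by
    rw [one_div, inv_mul_eq_div] at hmean
    exact (div_le_iff₀ hT).mp hmean
  have hIpos : 0 < I :=
    intervalIntegral.intervalIntegral_pos_of_pos (hΦc.intervalIntegrable 0 T) hΦpos hT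
  -- log of ρ
  set y := fun t => Real.log (ρ t) with hydef
  have hy : ∀ t, 0 ≤ t →
      HasDerivAt y (μ * (Φ t * (Real.tanh (ρ t) / ρ t) - σt)) t := by
    intro t ht
    have h := (hode t ht).log (hρpos t ht).ne'
    have hne : ρ t ≠ 0 := (hρpos t ht).ne'
    convert h using 1
    field_simp
  have hq1 : ∀ t, 0 ≤ t → Real.tanh (ρ t) / ρ t ≤ 1 := fun t ht =>
    (div_le_one (hρpos t ht)).mpr (tanh_lt_self' (hρpos t ht)).le
  have hq0 : ∀ t, 0 ≤ t → 0 ≤ Real.tanh (ρ t) / ρ t := fun t ht =>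
    div_nonneg (by
      rw [Real.tanh_eq_sinh_div_cosh]
      exact div_nonneg (Real.sinh_nonneg_iff.mpr (hρpos t ht).le) (Real.cosh_pos _).le)
      (hρpos t ht).le
  -- uniform upper bound over each future interval
  have bound1 : ∀ a t, 0 ≤ a → a ≤ t → y t ≤ y a + μ * (T * M) := by
    intro a t ha hat
    have hg : Continuous (fun s => μ * (Φ s - σt)) :=
      continuous_const.mul (hΦc.sub continuous_const)
    have hkey := key_comp hg hy (fun s hs => by
      have h1 : Φ s * (Real.tanh (ρ s) / ρ s) ≤ Φ s := by
        nlinarith [hq1 s hs, (hΦpos s).le, hq0 s hs]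
      have := mul_le_mul_of_nonneg_left (by linarith :
        Φ s * (Real.tanh (ρ s) / ρ s) - σt ≤ Φ s - σt) hμ.le
      exact this) ha hat
    have h2 : (∫ s in a..t, μ * (Φ s - σt)) ≤ μ * (T * M) := by
      rw [intervalIntegral.integral_const_mul]
      have := int_bound hT hΦc hΦper hM hM0.le hσt.le hIσ (a := a) (b := t) hat
      exact mul_le_mul_of_nonneg_left this hμ.le
    linarith
  -- y gets below any level A
  have low : ∀ A : ℝ, ∃ t₀, 0 ≤ t₀ ∧ y t₀ < A := by
    intro A
    by_contra hcon
    push_neg at hcon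
    have hA : ∀ t, 0 ≤ t → A ≤ y t := fun t ht => hcon t ht
    set δ := Real.exp A with hδdef
    set Mρ := Real.exp (y 0 + μ * (T * M)) with hMρdef
    have hρδ : ∀ t, 0 ≤ t → δ ≤ ρ t := by
      intro t ht
      calc δ ≤ Real.exp (y t) := Real.exp_le_exp.mpr (hA t ht)
        _ = ρ t := Real.exp_log (hρpos t ht)
    have hρM : ∀ t, 0 ≤ t → ρ t ≤ Mρ := by
      intro t ht
      calc ρ t = Real.exp (y t) := (Real.exp_log (hρpos t ht)).symm
        _ ≤ Mρ := Real.exp_le_exp.mpr (bound1 0 t le_rfl ht)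
    have hδM : δ ≤ Mρ := (hρδ 0 le_rfl).trans (hρM 0 le_rfl)
    have hδpos : 0 < δ := Real.exp_pos A
    obtain ⟨r₀, hr₀mem, hr₀'⟩ := isCompact_Icc.exists_isMaxOn
      (Set.nonempty_Icc.mpr hδM) (f := fun x => Real.tanh x / x)
      ((continuous_tanh'.continuousOn).div continuousOn_id
        fun x hx => (hδpos.trans_le hx.1).ne')
    have hr₀ := isMaxOn_iff.mp hr₀'
    set θ := Real.tanh r₀ / r₀ with hθdef
    have hr₀pos : 0 < r₀ := hδpos.trans_le hr₀mem.1
    have hθ1 : θ < 1 := (div_lt_one hr₀pos).mpr (tanh_lt_self' hr₀pos)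
    have hqθ : ∀ t, 0 ≤ t → Real.tanh (ρ t) / ρ t ≤ θ := fun t ht =>
      hr₀ (ρ t) ⟨hρδ t ht, hρM t ht⟩
    -- comparison with the contracting linear system
    have hgc : Continuous (fun s => μ * (θ * Φ s - σt)) :=
      continuous_const.mul ((continuous_const.mul hΦc).sub continuous_const)
    have hdecay : ∀ n : ℕ, y ((n : ℝ) * T) ≤ y 0 + μ * ((n : ℝ) * (θ * I - I)) := by
      intro n
      have hnT : (0:ℝ) ≤ (n : ℝ) * T := mul_nonneg (Nat.cast_nonneg n) hT.le
      have hkey := key_comp hgc hy (fun s hs => by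
        have h1 : Φ s * (Real.tanh (ρ s) / ρ s) ≤ θ * Φ s := by
          rw [mul_comm θ (Φ s)]
          exact mul_le_mul_of_nonneg_left (hqθ s hs) (hΦpos s).le
        have := mul_le_mul_of_nonneg_left (by linarith :
          Φ s * (Real.tanh (ρ s) / ρ s) - σt ≤ θ * Φ s - σt) hμ.le
        exact this) (le_refl (0:ℝ)) hnT
      have hΦn : (∫ s in (0:ℝ)..(n : ℝ) * T, Φ s) = (n : ℝ) * I := by
        have h := hΦper.intervalIntegral_add_zsmul_eq (n : ℤ) 0
          (fun u v => hΦc.intervalIntegrable u v)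
        simpa [zsmul_eq_mul] using h
      have hval : (∫ s in (0:ℝ)..(n : ℝ) * T, μ * (θ * Φ s - σt))
          = μ * (θ * ((n : ℝ) * I) - σt * ((n : ℝ) * T)) := by
        rw [intervalIntegral.integral_const_mul,
          intervalIntegral.integral_sub (f := fun x => θ * Φ x)
            ((continuous_const.mul hΦc).intervalIntegrable _ _)
            intervalIntegrable_const,
          intervalIntegral.integral_const_mul, hΦn,
          intervalIntegral.integral_const]
        rw [smul_eq_mul]
        ring
      rw [hval] at hkey
      have hσn : (n : ℝ) * I ≤ σt * ((n : ℝ) * T) := by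
        have := mul_le_mul_of_nonneg_left hIσ (Nat.cast_nonneg n : (0:ℝ) ≤ n)
        nlinarith
      nlinarith [hkey]
    -- pick n large enough
    have hc : 0 < μ * ((1 - θ) * I) := mul_pos hμ (mul_pos (by linarith) hIpos)
    obtain ⟨n, hn⟩ := exists_nat_gt ((y 0 - A) / (μ * ((1 - θ) * I)))
    have hn' : y 0 - A < (n : ℝ) * (μ * ((1 - θ) * I)) := by
      rw [div_lt_iff₀ hc] at hn
      linarith
    have h1 := hdecay n
    have h2 := hA ((n : ℝ) * T) (mul_nonneg (Nat.cast_nonneg n) hT.le)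
    nlinarith
  -- conclude
  rw [Metric.tendsto_atTop]
  intro ε hε
  obtain ⟨t₀, ht₀0, ht₀⟩ := low (Real.log ε - μ * (T * M))
  refine ⟨t₀, fun t ht => ?_⟩
  have htn : 0 ≤ t := ht₀0.trans ht
  rw [Real.dist_eq, sub_zero, abs_of_pos (hρpos t htn)]
  have hb := bound1 t₀ t ht₀0 ht
  have hyt : y t < Real.log ε := by linarith
  calc ρ t = Real.exp (y t) := (Real.exp_log (hρpos t htn)).symm
    _ < Real.exp (Real.log ε) := Real.exp_lt_exp.mpr hyt
    _ = ε := Real.exp_log hε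
end
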